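/- Let n and l be natural numbers with 2l + 2 ≤ n. Then the partial binomial sum satisfies ∑_{i=0}^{l} C(n, i) ≤ 2^{n−1} · exp(−(n − 2l − 2)² / (4(n − l − 1))). -/

import Mathlib

/-!
Each step `i ↦ i + 1` with `i ≤ a` and `2a < n` multiplies `C(n, i)` by
`(n - i) / (i + 1) ≥ (n - a) / (a + 1)`, and `(a + 1) / (n - a) ≤ exp (-(n - 2a - 1) / (n - l))`
when `a ≥ l`. Shifting the first `l + 1` binomials by `s` steps therefore gains the factor
`exp (-s (n - 2l - s) / (n - l))`, while the shifted terms lie in a lower half of row `n`,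
whose sum is at most `2^(n-1)` by symmetry. The largest admissible shift, `s = ⌊(n - 2l - 1) / 2⌋`,
gives the exponent `(n - 2l - 2)² / (4 (n - l - 1))`.
-/

open Finset

namespace Nat

theorem sum_range_choose_le_two_pow_pred {n k : ℕ} (h : 2 * k < n) :
    ∑ i ∈ range (k + 1), n.choose i ≤ 2 ^ (n - 1) := by
  have reflect : ∑ i ∈ range (k + 1), n.choose i = ∑ i ∈ Ico (n - k) (n + 1), n.choose i := by
    have := sum_Ico_reflect (fun i => n.choose i) 0 (show k + 1 ≤ n + 1 by omega)
    rw [Nat.Ico_zero_eq_range, show n + 1 - (k + 1) = n - k by omega, Nat.sub_zero] at this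
    rw [← this]
    refine sum_congr rfl fun i hi => (choose_symm ?_).symm
    rw [mem_range] at hi
    omega
  have upper : ∑ i ∈ Ico (n - k) (n + 1), n.choose i ≤ ∑ i ∈ Ico (k + 1) (n + 1), n.choose i :=
    sum_le_sum_of_subset (Ico_subset_Ico (by omega) le_rfl)
  have total := sum_range_add_sum_Ico (fun i => n.choose i) (show k + 1 ≤ n + 1 by omega)
  rw [sum_range_choose] at total
  have : 2 ^ n = 2 * 2 ^ (n - 1) := by rw [← _root_.pow_succ', Nat.sub_add_cancel (by omega : 1 ≤ n)]
  omega

theorem choose_mul_sub_le_choose_succ_mul {n i a : ℕ} (h : i ≤ a) :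
    n.choose i * (n - a) ≤ n.choose (i + 1) * (a + 1) := by
  refine Nat.le_of_mul_le_mul_right ?_ (succ_pos i)
  calc n.choose i * (n - a) * (i + 1) = n.choose i * ((n - a) * (i + 1)) := by ring
    _ ≤ n.choose i * ((n - i) * (a + 1)) := by gcongr
    _ = n.choose (i + 1) * (a + 1) * (i + 1) := by rw [← mul_assoc, ← choose_succ_right_eq]; ring

end Nat

open Real

theorem choose_le_choose_succ_mul_exp {n l i a : ℕ} (hi : i ≤ a) (hl : l ≤ a) (ha : 2 * a < n) :
    (n.choose i : ℝ) ≤ n.choose (i + 1) * exp (-((n : ℝ) - 2 * a - 1) / ((n : ℝ) - l)) := by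
  have ha' : 2 * (a : ℝ) + 1 ≤ n := by exact_mod_cast ha
  have hl' : (l : ℝ) ≤ a := by exact_mod_cast hl
  have step : (n.choose i : ℝ) * ((n : ℝ) - a) ≤ n.choose (i + 1) * ((a : ℝ) + 1) := by
    have := Nat.cast_le (α := ℝ).2 (Nat.choose_mul_sub_le_choose_succ_mul (n := n) hi)
    push_cast [Nat.cast_sub (by omega : a ≤ n)] at this
    exact this
  -- `(a + 1) / (n - a) = 1 - (n - 2a - 1) / (n - a)`, and then `1 - x ≤ exp (-x)`
  have ratio : ((a : ℝ) + 1) / ((n : ℝ) - a) ≤ exp (-((n : ℝ) - 2 * a - 1) / ((n : ℝ) - l)) := by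
    rw [neg_div]
    refine le_trans ?_ (one_sub_le_exp_neg _)
    rw [div_le_iff₀ (by linarith)]
    have : ((n : ℝ) - 2 * a - 1) / ((n : ℝ) - l) * ((n : ℝ) - a) ≤ (n : ℝ) - 2 * a - 1 := by
      rw [div_mul_eq_mul_div, div_le_iff₀ (by linarith)]
      nlinarith
    nlinarith
  calc (n.choose i : ℝ) ≤ n.choose (i + 1) * (((a : ℝ) + 1) / ((n : ℝ) - a)) := by
        rw [mul_div_assoc', le_div_iff₀ (by linarith)]
        exact step
    _ ≤ _ := by gcongr

theorem choose_le_choose_add_mul_exp {n l j : ℕ} (hj : j ≤ l) (s : ℕ) (hs : 2 * (l + s) < n) :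
    (n.choose j : ℝ) ≤ n.choose (j + s) * exp (-(s * ((n : ℝ) - 2 * l - s)) / ((n : ℝ) - l)) := by
  induction s with
  | zero => simp
  | succ s ih =>
    calc (n.choose j : ℝ)
        ≤ n.choose (j + s) * exp (-(s * ((n : ℝ) - 2 * l - s)) / ((n : ℝ) - l)) := ih (by omega)
      _ ≤ n.choose (j + s + 1) * exp (-((n : ℝ) - 2 * ↑(l + s) - 1) / ((n : ℝ) - l)) *
            exp (-(s * ((n : ℝ) - 2 * l - s)) / ((n : ℝ) - l)) := by
        gcongr
        exact choose_le_choose_succ_mul_exp (by omega) (by omega) (by omega)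
      _ = _ := by
        rw [mul_assoc, ← exp_add]
        push_cast
        ring_nf

theorem sum_range_choose_le_two_pow_pred_mul_exp {n l s : ℕ} (hs : 2 * (l + s) < n) :
    ∑ i ∈ range (l + 1), (n.choose i : ℝ) ≤
      2 ^ (n - 1) * exp (-(s * ((n : ℝ) - 2 * l - s)) / ((n : ℝ) - l)) := by
  have shifted : ∑ j ∈ range (l + 1), n.choose (j + s) ≤ 2 ^ (n - 1) := by
    refine le_trans ?_ (Nat.sum_range_choose_le_two_pow_pred (k := l + s) hs)
    rw [show l + s + 1 = s + (l + 1) by ring, sum_range_add (fun i => n.choose i) s (l + 1)]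
    simp only [add_comm _ s]
    exact Nat.le_add_left _ _
  calc ∑ i ∈ range (l + 1), (n.choose i : ℝ)
      ≤ ∑ j ∈ range (l + 1), (n.choose (j + s) : ℝ) *
          exp (-(s * ((n : ℝ) - 2 * l - s)) / ((n : ℝ) - l)) :=
        sum_le_sum fun j hj =>
          choose_le_choose_add_mul_exp (Nat.lt_succ_iff.1 (mem_range.1 hj)) s hs
    _ ≤ _ := by
      rw [← sum_mul]
      gcongr
      exact_mod_cast shifted

theorem sq_div_le_mul_sub_div {n l s : ℝ} (hl : 0 ≤ l) (hn : 2 * l + 2 ≤ n)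
    (hs : n - 2 * l - 2 ≤ 2 * s) (hs' : 2 * s ≤ n - 2 * l) :
    (n - 2 * l - 2) ^ 2 / (4 * (n - l - 1)) ≤ s * (n - 2 * l - s) / (n - l) := by
  rw [div_le_div_iff₀ (by linarith) (by linarith)]
  -- `s (n - 2l - s) ≥ (n - 2l - 2) (n - 2l + 2) / 4` because `2s` is within `2` of `n - 2l`
  nlinarith [mul_nonneg (sub_nonneg.2 hs) (sub_nonneg.2 hs'), mul_nonneg (sub_nonneg.2 hn) hl]

theorem stmt_6 (n l : ℕ) (h : 2 * l + 2 ≤ n) :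
    (∑ i ∈ Finset.range (l + 1), (n.choose i : ℝ)) ≤
      2 ^ (n - 1) *
        Real.exp (-((n : ℝ) - 2 * l - 2) ^ 2 / (4 * ((n : ℝ) - l - 1))) := by
  set s := (n - 2 * l - 1) / 2
  have hs : 2 * (l + s) < n := by omega
  refine (sum_range_choose_le_two_pow_pred_mul_exp hs).trans ?_
  gcongr 2 ^ (n - 1) * exp ?_
  rw [neg_div, neg_div, neg_le_neg_iff]
  apply sq_div_le_mul_sub_div (Nat.cast_nonneg l)
  · exact_mod_cast h
  · linarith [show (n : ℝ) ≤ 2 * l + 2 * s + 2 by exact_mod_cast (by omega : n ≤ 2 * l + 2 * s + 2)]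
  · linarith [show 2 * (l : ℝ) + 2 * s ≤ n by exact_mod_cast (by omega : 2 * l + 2 * s ≤ n)]
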